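/- arXiv:1202.3642 — 7 statements merged into one kernel-verified Lean document; each statement's English description precedes it below -/
import Mathlib

section
/- Let G be a connected simple graph with countable vertex set, let d be its graph distance, let A be a bounded self-adjoint operator on ℓ²(G) with matrix elements A(x,y) := ⟨δ_x, A δ_y⟩, and let V : G → ℝ be a bounded function acting on ℓ²(G) as the multiplication operator; set H = A + V. Suppose there exists α > 0 with g_A(α) := sup_x Σ_y |A(x,y)| e^{α d(x,y)} < ∞. Then for every β > 0 and every vertex u there exists a constant C < ∞ (depending only on β, α and g_A(α)) such that for all η ∈ (0,1]: Σ_x d(x,u)^β · 2η ∫₀^∞ e^{-2ηt} |⟨δ_x, e^{-itH} δ_u⟩|² dt ≤ C · η^{-β}. -/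
/-!
Write `g` for the exponentially weighted column norm of the matrix of `H = A + V`; it is at most
`g_A(α) + sup |V|`, since rows and columns of a self-adjoint matrix agree. The triangle inequality
for `d` makes this weighted norm submultiplicative, so summing the power series of `e^{-itH}`
gives `∑_x |e^{-itH}(x,u)| e^{α d(x,u)} ≤ e^{tg}`. Splitting the sum at distance `2tg/α` and
using unitarity (`∑_x |e^{-itH}(x,u)|² = 1`) bounds the `β`-th moment at time `t` by `a t^β + b`,
and averaging against `2η e^{-2ηt}` turns `t^β` into `O(η^{-β})`.
-/

open MeasureTheory Complex
open scoped ENNReal lp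

local notation "𝓛(" V ")" => ℓ²(V, ℂ) →L[ℂ] ℓ²(V, ℂ)

section MatrixEntries

variable {V : Type*} [DecidableEq V]

noncomputable def matrixEntry (T : 𝓛(V)) (x y : V) : ℂ :=
  inner ℂ (lp.single 2 x (1 : ℂ)) (T (lp.single 2 y 1))

theorem inner_single_one_left (x : V) (ψ : ℓ²(V, ℂ)) :
    inner ℂ (lp.single 2 x (1 : ℂ)) ψ = ψ x := by
  simp [lp.inner_single_left]

theorem matrixEntry_eq_apply (T : 𝓛(V)) (x y : V) :
    matrixEntry T x y = T (lp.single 2 y 1) x :=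
  inner_single_one_left x _

theorem hasSum_matrixEntry_mul_apply (T : 𝓛(V)) (ψ : ℓ²(V, ℂ)) (x : V) :
    HasSum (fun y => matrixEntry T x y * ψ y) (T ψ x) := by
  have h := ((lp.hasSum_single (by norm_num) ψ).mapL T).mapL
    (innerSL ℂ (lp.single 2 x (1 : ℂ)))
  simp only [innerSL_apply_apply, inner_single_one_left] at h
  refine h.congr_fun fun y => ?_
  have : (lp.single 2 y (ψ y) : ℓ²(V, ℂ)) = ψ y • lp.single 2 y 1 := by
    rw [← lp.single_smul (E := fun _ : V => ℂ), smul_eq_mul, mul_one]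
  rw [this, map_smul, lp.coeFn_smul, Pi.smul_apply, smul_eq_mul, matrixEntry_eq_apply, mul_comm]

theorem hasSum_matrixEntry_mul (S T : 𝓛(V)) (x y : V) :
    HasSum (fun z => matrixEntry S x z * matrixEntry T z y) (matrixEntry (S * T) x y) := by
  simpa only [matrixEntry_eq_apply T, matrixEntry_eq_apply (S * T), mul_apply_eq_comp] using
    hasSum_matrixEntry_mul_apply S (T (lp.single 2 y 1)) x

theorem hasSum_matrixEntry_exp (T : 𝓛(V)) (c : ℂ) (x y : V) :
    HasSum (fun n => ((n.factorial : ℂ)⁻¹ * c ^ n) * matrixEntry (T ^ n) x y)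
      (matrixEntry (NormedSpace.exp (c • T)) x y) := by
  have h := (NormedSpace.exp_series_hasSum_exp' (𝕂 := ℂ) (c • T)).mapL
    ((innerSL ℂ (lp.single 2 x (1 : ℂ))).comp
      (ContinuousLinearMap.apply ℂ _ (lp.single 2 y 1)))
  refine h.congr_fun fun n => ?_
  simp only [ContinuousLinearMap.comp_apply, ContinuousLinearMap.apply_apply, innerSL_apply_apply,
    smul_pow, FunLike.coe_smul, Pi.smul_apply, inner_smul_right, matrixEntry, mul_assoc]

theorem continuous_matrixEntry (x y : V) :
    Continuous fun T : 𝓛(V) => matrixEntry T x y :=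
  continuous_const.inner (continuous_id.clm_apply continuous_const)

theorem enorm_matrixEntry_comm {T : 𝓛(V)} (hT : IsSelfAdjoint T) (x y : V) :
    ‖matrixEntry T x y‖ₑ = ‖matrixEntry T y x‖ₑ := by
  rw [matrixEntry, ← ContinuousLinearMap.adjoint_inner_left, hT.adjoint_eq, ← inner_conj_symm,
    RCLike.enorm_conj, matrixEntry]

end MatrixEntries

section DistWeight

variable {V : Type*} (G : SimpleGraph V) (α : ℝ)

noncomputable def distWeight (x y : V) : ℝ≥0∞ :=
  ENNReal.ofReal (Real.exp (α * G.dist x y))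

variable {G α}

theorem distWeight_self (x : V) : distWeight G α x x = 1 := by
  simp [distWeight]

theorem distWeight_comm (x y : V) : distWeight G α x y = distWeight G α y x := by
  rw [distWeight, G.dist_comm, distWeight]

theorem distWeight_le_mul (hG : G.Connected) (hα : 0 ≤ α) (x y z : V) :
    distWeight G α x y ≤ distWeight G α x z * distWeight G α z y := by
  simp only [distWeight]
  rw [← ENNReal.ofReal_mul (Real.exp_nonneg _), ← Real.exp_add, ← mul_add]
  gcongr
  exact_mod_cast hG.dist_triangle

end DistWeight

section ExpColumnNorm

variable {V : Type*} [DecidableEq V] {G : SimpleGraph V} {α : ℝ}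

variable (G α) in
/-- Columns instead of the rows of `g_T(α)`, so that it controls `x ↦ e^{-itH}(x,u)` directly. -/
noncomputable def expColumnNorm (T : 𝓛(V)) : ℝ≥0∞ :=
  ⨆ y, ∑' x, ‖matrixEntry T x y‖ₑ * distWeight G α x y

theorem tsum_le_expColumnNorm (T : 𝓛(V)) (y : V) :
    ∑' x, ‖matrixEntry T x y‖ₑ * distWeight G α x y ≤
      expColumnNorm G α T :=
  le_iSup (fun y => ∑' x, ‖matrixEntry T x y‖ₑ * distWeight G α x y) y

theorem expColumnNorm_eq_iSup_of_isSelfAdjoint {T : 𝓛(V)}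
    (hT : IsSelfAdjoint T) :
    expColumnNorm G α T =
      ⨆ x, ∑' y, ENNReal.ofReal (‖matrixEntry T x y‖ * Real.exp (α * G.dist x y)) := by
  refine iSup_congr fun x => tsum_congr fun y => ?_
  rw [ENNReal.ofReal_mul (norm_nonneg _), ofReal_norm, ← distWeight, enorm_matrixEntry_comm hT,
    distWeight_comm]

theorem expColumnNorm_add_le (S T : 𝓛(V)) :
    expColumnNorm G α (S + T) ≤ expColumnNorm G α S + expColumnNorm G α T := by
  refine iSup_le fun y => ?_
  calc ∑' x, ‖matrixEntry (S + T) x y‖ₑ * distWeight G α x y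
      ≤ ∑' x, (‖matrixEntry S x y‖ₑ * distWeight G α x y +
          ‖matrixEntry T x y‖ₑ * distWeight G α x y) := by
        refine ENNReal.tsum_le_tsum fun x => ?_
        rw [← add_mul, matrixEntry, add_apply, inner_add_right]
        gcongr
        exact enorm_add_le _ _
    _ = _ := ENNReal.tsum_add
    _ ≤ _ := add_le_add (tsum_le_expColumnNorm S y) (tsum_le_expColumnNorm T y)

theorem expColumnNorm_le_of_apply_eq_mul {T : 𝓛(V)} {w : V → ℂ} {M : ℝ}
    (hT : ∀ ψ x, T ψ x = w x * ψ x) (hw : ∀ x, ‖w x‖ ≤ M) :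
    expColumnNorm G α T ≤ ENNReal.ofReal M := by
  refine iSup_le fun y => ?_
  rw [tsum_eq_single y fun x hx => by
    simp [matrixEntry_eq_apply, hT, hx]]
  simpa [matrixEntry_eq_apply, hT, distWeight_self] using ENNReal.ofReal_le_ofReal (hw y)

theorem expColumnNorm_one_le : expColumnNorm G α 1 ≤ 1 := by
  simpa using expColumnNorm_le_of_apply_eq_mul (G := G) (α := α) (T := 1) (w := 1) (M := 1)
    (fun ψ x => by simp) (by simp)

theorem expColumnNorm_mul_le (hG : G.Connected) (hα : 0 ≤ α) (S T : 𝓛(V)) :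
    expColumnNorm G α (S * T) ≤ expColumnNorm G α S * expColumnNorm G α T := by
  refine iSup_le fun y => ?_
  calc ∑' x, ‖matrixEntry (S * T) x y‖ₑ * distWeight G α x y
      ≤ ∑' x, ∑' z, ‖matrixEntry S x z‖ₑ * ‖matrixEntry T z y‖ₑ *
          distWeight G α x y := by
        refine ENNReal.tsum_le_tsum fun x => ?_
        rw [ENNReal.tsum_mul_right, ← (hasSum_matrixEntry_mul S T x y).tsum_eq]
        gcongr
        simpa only [enorm_mul] using
          enorm_tsum_le_tsum_enorm (f := fun z => matrixEntry S x z * matrixEntry T z y)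
    _ ≤ ∑' x, ∑' z, ‖matrixEntry T z y‖ₑ * distWeight G α z y *
          (‖matrixEntry S x z‖ₑ * distWeight G α x z) := by
        refine ENNReal.tsum_le_tsum fun x => ENNReal.tsum_le_tsum fun z => ?_
        calc _ ≤ ‖matrixEntry S x z‖ₑ * ‖matrixEntry T z y‖ₑ *
              (distWeight G α x z *
                distWeight G α z y) := by
              gcongr
              exact distWeight_le_mul hG hα x y z
          _ = _ := by ring
    _ = ∑' z, ‖matrixEntry T z y‖ₑ * distWeight G α z y *
          ∑' x, ‖matrixEntry S x z‖ₑ * distWeight G α x z := by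
        rw [ENNReal.tsum_comm]
        simp_rw [ENNReal.tsum_mul_left]
    _ ≤ ∑' z, ‖matrixEntry T z y‖ₑ * distWeight G α z y *
          expColumnNorm G α S := by
        gcongr with z
        exact tsum_le_expColumnNorm S z
    _ ≤ expColumnNorm G α T * expColumnNorm G α S := by
        rw [ENNReal.tsum_mul_right]
        gcongr
        exact tsum_le_expColumnNorm T y
    _ = _ := mul_comm _ _

theorem expColumnNorm_pow_le (hG : G.Connected) (hα : 0 ≤ α) (T : 𝓛(V))
    (n : ℕ) : expColumnNorm G α (T ^ n) ≤ expColumnNorm G α T ^ n := by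
  induction n with
  | zero => simpa using expColumnNorm_one_le
  | succ n ih =>
    rw [pow_succ, pow_succ]
    exact (expColumnNorm_mul_le hG hα _ _).trans (by gcongr)

theorem expColumnNorm_exp_smul_le (hG : G.Connected) (hα : 0 ≤ α) {T : 𝓛(V)}
    (hT : expColumnNorm G α T ≠ ⊤) (c : ℂ) :
    expColumnNorm G α (NormedSpace.exp (c • T)) ≤
      ENNReal.ofReal (Real.exp (‖c‖ * (expColumnNorm G α T).toReal)) := by
  set g := expColumnNorm G α T
  have hcoeff (n : ℕ) :
      ‖((n.factorial : ℂ)⁻¹ * c ^ n)‖ₑ = ENNReal.ofReal (‖c‖ ^ n / n.factorial) := by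
    rw [← ofReal_norm, norm_mul, norm_pow, norm_inv, Complex.norm_natCast, div_eq_inv_mul]
  have hexp : ∑' n : ℕ, ENNReal.ofReal (‖c‖ ^ n / n.factorial) * g ^ n =
      ENNReal.ofReal (Real.exp (‖c‖ * g.toReal)) := by
    have h := NormedSpace.expSeries_div_hasSum_exp (‖c‖ * g.toReal)
    rw [← Real.exp_eq_exp_ℝ] at h
    rw [← h.tsum_eq, ENNReal.ofReal_tsum_of_nonneg (fun n => by positivity) h.summable]
    refine tsum_congr fun n => ?_
    rw [mul_pow, mul_div_right_comm, ENNReal.ofReal_mul (by positivity), ENNReal.ofReal_pow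
      ENNReal.toReal_nonneg, ENNReal.ofReal_toReal hT]
  refine iSup_le fun y => ?_
  calc ∑' x, ‖matrixEntry (NormedSpace.exp (c • T)) x y‖ₑ * distWeight G α x y
      ≤ ∑' x, ∑' n : ℕ, ENNReal.ofReal (‖c‖ ^ n / n.factorial) *
          (‖matrixEntry (T ^ n) x y‖ₑ * distWeight G α x y) := by
        refine ENNReal.tsum_le_tsum fun x => ?_
        simp_rw [← mul_assoc, ← hcoeff, ← enorm_mul]
        rw [ENNReal.tsum_mul_right, ← (hasSum_matrixEntry_exp T c x y).tsum_eq]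
        gcongr
        exact enorm_tsum_le_tsum_enorm
    _ = ∑' n : ℕ, ENNReal.ofReal (‖c‖ ^ n / n.factorial) *
          ∑' x, ‖matrixEntry (T ^ n) x y‖ₑ * distWeight G α x y := by
        rw [ENNReal.tsum_comm]
        simp_rw [ENNReal.tsum_mul_left]
    _ ≤ ∑' n : ℕ, ENNReal.ofReal (‖c‖ ^ n / n.factorial) * g ^ n := by
        gcongr with n
        exact (tsum_le_expColumnNorm _ y).trans (expColumnNorm_pow_le hG hα T n)
    _ = _ := hexp

end ExpColumnNorm

section Evolution

variable {V : Type*}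

theorem isSelfAdjoint_of_apply_eq_ofReal_mul {T : 𝓛(V)} {v : V → ℝ}
    (hT : ∀ ψ x, T ψ x = (v x : ℂ) * ψ x) : IsSelfAdjoint T := by
  rw [ContinuousLinearMap.isSelfAdjoint_iff_isSymmetric]
  intro ψ φ
  simp only [ContinuousLinearMap.coe_coe, lp.inner_eq_tsum, hT, RCLike.inner_apply, map_mul,
    Complex.conj_ofReal]
  exact tsum_congr fun x => by ring

theorem norm_exp_smul_apply_of_isSelfAdjoint {H : 𝓛(V)} (hH : IsSelfAdjoint H)
    (t : ℝ) (ψ : ℓ²(V, ℂ)) : ‖NormedSpace.exp ((-(I * t)) • H) ψ‖ = ‖ψ‖ := by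
  have hskew : (-(I * t)) • H ∈ skewAdjoint (𝓛(V)) := by
    rw [skewAdjoint.mem_iff, star_smul, hH.star_eq]
    simp [Complex.conj_I, Complex.conj_ofReal, neg_smul]
  -- `NormedSpace.exp` lemmas want a normed `ℚ`-algebra, which is not inferred for operators.
  let +nondep : NormedAlgebra ℚ (𝓛(V)) := .restrictScalars ℚ ℂ _
  have hunitary := NormedSpace.exp_mem_unitary_of_mem_skewAdjoint hskew
  exact ContinuousLinearMap.norm_map_of_mem_unitary hunitary ψ

theorem continuous_matrixEntry_exp_smul [DecidableEq V] (H : 𝓛(V)) (x y : V) :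
    Continuous fun t : ℝ => matrixEntry (NormedSpace.exp ((-(I * t)) • H)) x y := by
  let +nondep : NormedAlgebra ℚ (𝓛(V)) := .restrictScalars ℚ ℂ _
  exact (continuous_matrixEntry x y).comp
    (NormedSpace.exp_continuous.comp ((continuous_ofReal.const_mul I).neg.smul continuous_const))

end Evolution

theorem rpow_le_rpow_add_mul_exp {α β d R : ℝ} (hα : 0 < α) (hβ : 0 < β) (hd : 0 ≤ d)
    (hR : 0 ≤ R) : d ^ β ≤ R ^ β + (2 * β / α) ^ β * Real.exp (α * d - α * R / 2) := by
  rcases le_or_gt d R with hdR | hRd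
  · have : 0 ≤ (2 * β / α) ^ β * Real.exp (α * d - α * R / 2) := by positivity
    linarith [Real.rpow_le_rpow hd hdR hβ.le]
  · have h := ProbabilityTheory.rpow_abs_le_mul_exp_abs d hβ.le (t := α / 2) (by positivity)
    rw [abs_of_nonneg hd, abs_of_pos (by positivity), div_div_eq_mul_div, mul_comm β] at h
    refine h.trans (le_add_of_nonneg_of_le (by positivity) ?_)
    gcongr
    nlinarith

theorem tsum_ofReal_norm_sq {V : Type*} (ψ : ℓ²(V, ℂ)) :
    ∑' x, ENNReal.ofReal (‖ψ x‖ ^ 2) = ENNReal.ofReal (‖ψ‖ ^ 2) := by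
  have h := lp.hasSum_norm (p := 2) (by norm_num) ψ
  simp only [ENNReal.toReal_ofNat, Real.rpow_two] at h
  rw [← ENNReal.ofReal_tsum_of_nonneg (fun x => by positivity) h.summable, h.tsum_eq]

theorem tsum_ofReal_rpow_mul_norm_sq_le {V : Type*} {ψ : ℓ²(V, ℂ)} (hψ : ‖ψ‖ ≤ 1)
    {r : V → ℝ} (hr : ∀ x, 0 ≤ r x) {α β K : ℝ} (hα : 0 < α) (hβ : 0 < β) (hK : 0 ≤ K)
    (hexp : ∑' x, ‖ψ x‖ₑ * ENNReal.ofReal (Real.exp (α * r x)) ≤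
      ENNReal.ofReal (Real.exp K)) :
    ∑' x, ENNReal.ofReal (r x ^ β * ‖ψ x‖ ^ 2) ≤
      ENNReal.ofReal ((2 * K / α) ^ β + (2 * β / α) ^ β) := by
  -- Inside radius `R` use `∑ |ψ|² ≤ 1`; outside, `|ψ|² ≤ |ψ|` and `hexp` pays for `e^{αr - K}`.
  set R := 2 * K / α
  set c := (2 * β / α) ^ β
  have hRK : α * R / 2 = K := by simp only [R]; field_simp
  have hpoint (x : V) : ENNReal.ofReal (r x ^ β * ‖ψ x‖ ^ 2) ≤
      ENNReal.ofReal (R ^ β) * ENNReal.ofReal (‖ψ x‖ ^ 2) +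
        ENNReal.ofReal (c * Real.exp (-K)) *
          (‖ψ x‖ₑ * ENNReal.ofReal (Real.exp (α * r x))) := by
    have hψx : ‖ψ x‖ ≤ 1 := (lp.norm_apply_le_norm two_ne_zero ψ x).trans hψ
    rw [← ofReal_norm, ← ENNReal.ofReal_mul (norm_nonneg _),
      ← ENNReal.ofReal_mul (by positivity), ← ENNReal.ofReal_mul (by positivity),
      ← ENNReal.ofReal_add (by positivity) (by positivity)]
    refine ENNReal.ofReal_le_ofReal ?_
    have hd := rpow_le_rpow_add_mul_exp hα hβ (hr x) (by positivity : 0 ≤ R)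
    rw [hRK, sub_eq_add_neg, Real.exp_add] at hd
    have hsq : ‖ψ x‖ ^ 2 ≤ ‖ψ x‖ := by nlinarith [norm_nonneg (ψ x)]
    calc r x ^ β * ‖ψ x‖ ^ 2
        ≤ (R ^ β + c * (Real.exp (α * r x) * Real.exp (-K))) * ‖ψ x‖ ^ 2 := by gcongr
      _ ≤ R ^ β * ‖ψ x‖ ^ 2 + c * Real.exp (-K) * (‖ψ x‖ * Real.exp (α * r x)) := by
        have : c * (Real.exp (α * r x) * Real.exp (-K)) * ‖ψ x‖ ^ 2 ≤
            c * (Real.exp (α * r x) * Real.exp (-K)) * ‖ψ x‖ := by gcongr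
        linear_combination this
  calc ∑' x, ENNReal.ofReal (r x ^ β * ‖ψ x‖ ^ 2)
      ≤ ENNReal.ofReal (R ^ β) * ∑' x, ENNReal.ofReal (‖ψ x‖ ^ 2) +
          ENNReal.ofReal (c * Real.exp (-K)) *
            ∑' x, ‖ψ x‖ₑ * ENNReal.ofReal (Real.exp (α * r x)) := by
        rw [← ENNReal.tsum_mul_left, ← ENNReal.tsum_mul_left, ← ENNReal.tsum_add]
        exact ENNReal.tsum_le_tsum hpoint
    _ ≤ ENNReal.ofReal (R ^ β) * ENNReal.ofReal (1 ^ 2) +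
          ENNReal.ofReal (c * Real.exp (-K)) * ENNReal.ofReal (Real.exp K) := by
        rw [tsum_ofReal_norm_sq]
        gcongr
    _ = ENNReal.ofReal (R ^ β + c) := by
        rw [← ENNReal.ofReal_mul (by positivity), ← ENNReal.ofReal_mul (by positivity),
          ← ENNReal.ofReal_add (by positivity) (by positivity), mul_assoc, ← Real.exp_add,
          neg_add_cancel, Real.exp_zero, one_pow, mul_one, mul_one]

theorem tsum_dist_rpow_mul_sq_matrixEntry_exp_le {V : Type*} [DecidableEq V]
    {G : SimpleGraph V} (hG : G.Connected) {α β : ℝ} (hα : 0 < α) (hβ : 0 < β)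
    {H : 𝓛(V)} (hH : IsSelfAdjoint H) (hHfin : expColumnNorm G α H ≠ ⊤)
    (u : V) {t : ℝ} (ht : 0 ≤ t) :
    ∑' x, ENNReal.ofReal ((G.dist x u : ℝ) ^ β *
        ‖matrixEntry (NormedSpace.exp ((-(I * t)) • H)) x u‖ ^ 2) ≤
      ENNReal.ofReal
        ((2 * (expColumnNorm G α H).toReal / α) ^ β * t ^ β + (2 * β / α) ^ β) := by
  set s := (expColumnNorm G α H).toReal
  set ψ := NormedSpace.exp ((-(I * t)) • H) (lp.single 2 u 1)
  have hψ : ‖ψ‖ ≤ 1 := by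
    rw [norm_exp_smul_apply_of_isSelfAdjoint hH, lp.norm_single two_pos, norm_one]
  have hexp : ∑' x, ‖ψ x‖ₑ * ENNReal.ofReal (Real.exp (α * G.dist x u)) ≤
      ENNReal.ofReal (Real.exp (t * s)) := by
    have h := (tsum_le_expColumnNorm _ u).trans
      (expColumnNorm_exp_smul_le hG hα.le hHfin (-(I * t)))
    rw [norm_neg, norm_mul, norm_I, one_mul, norm_real, Real.norm_of_nonneg ht] at h
    simpa only [matrixEntry_eq_apply, distWeight] using h
  have hmoment := tsum_ofReal_rpow_mul_norm_sq_le hψ (r := fun x => G.dist x u)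
    (fun x => by positivity) hα hβ (by positivity) hexp
  simp only [matrixEntry_eq_apply]
  refine hmoment.trans_eq ?_
  rw [show 2 * (t * s) / α = 2 * s / α * t by ring, Real.mul_rpow (by positivity) ht]

-- The Bochner integral of a non-integrable `f` is the junk value `0`, so this holds regardless.
theorem ofReal_integral_le_lintegral_ofReal {α : Type*} [MeasurableSpace α] {μ : Measure α}
    {f : α → ℝ} (hf : 0 ≤ᵐ[μ] f) (hfm : AEStronglyMeasurable f μ) :
    ENNReal.ofReal (∫ a, f a ∂μ) ≤ ∫⁻ a, ENNReal.ofReal (f a) ∂μ := by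
  rw [integral_eq_lintegral_of_nonneg_ae hf hfm]
  exact ENNReal.ofReal_toReal_le

noncomputable def timeAverage (η : ℝ) (f : ℝ → ℝ) : ℝ :=
  2 * η * ∫ t in Set.Ioi 0, Real.exp (-2 * η * t) * f t

theorem tsum_ofReal_mul_timeAverage_le {ι : Type*} [Countable ι] {w : ι → ℝ}
    (hw : ∀ i, 0 ≤ w i) {F : ι → ℝ → ℝ} (hF : ∀ i, Measurable (F i)) (hF0 : ∀ i t, 0 ≤ F i t)
    {η : ℝ} (hη : 0 ≤ η) {m : ℝ → ℝ}
    (hm : ∀ t, 0 < t → ∑' i, ENNReal.ofReal (w i * F i t) ≤ ENNReal.ofReal (m t)) :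
    ∑' i, ENNReal.ofReal (w i * timeAverage η (F i)) ≤
      ENNReal.ofReal (2 * η) *
        ∫⁻ t in Set.Ioi 0, ENNReal.ofReal (Real.exp (-2 * η * t) * m t) := by
  have hmeas (i : ι) : Measurable fun t => w i * (Real.exp (-2 * η * t) * F i t) := by fun_prop
  calc ∑' i, ENNReal.ofReal (w i * timeAverage η (F i))
      ≤ ∑' i, ENNReal.ofReal (2 * η) *
          ∫⁻ t in Set.Ioi 0, ENNReal.ofReal (w i * (Real.exp (-2 * η * t) * F i t)) := by
        refine ENNReal.tsum_le_tsum fun i => ?_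
        rw [timeAverage, mul_left_comm, ENNReal.ofReal_mul (by linarith), ← integral_const_mul]
        gcongr
        exact ofReal_integral_le_lintegral_ofReal
          (Filter.Eventually.of_forall fun t =>
            mul_nonneg (hw i) (mul_nonneg (Real.exp_nonneg _) (hF0 i t)))
          (hmeas i).aestronglyMeasurable
    _ = ENNReal.ofReal (2 * η) *
          ∫⁻ t in Set.Ioi 0, ∑' i, ENNReal.ofReal (w i * (Real.exp (-2 * η * t) * F i t)) := by
        rw [ENNReal.tsum_mul_left,
          lintegral_tsum fun i => (hmeas i).ennreal_ofReal.aemeasurable]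
    _ ≤ _ := by
        refine mul_le_mul_right (setLIntegral_mono' measurableSet_Ioi fun t ht => ?_) _
        simp_rw [mul_left_comm (w _), ENNReal.ofReal_mul (Real.exp_nonneg _),
          ENNReal.tsum_mul_left]
        gcongr
        exact hm t ht

theorem ofReal_mul_lintegral_exp_mul_rpow_add_le {η β a b : ℝ} (hη : 0 < η) (hη1 : η ≤ 1)
    (hβ : 0 < β) (ha : 0 ≤ a) (hb : 0 ≤ b) :
    ENNReal.ofReal (2 * η) *
        ∫⁻ t in Set.Ioi 0, ENNReal.ofReal (Real.exp (-2 * η * t) * (a * t ^ β + b)) ≤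
      ENNReal.ofReal (2 * (a * β ^ β + b) * η ^ (-β)) := by
  -- `t ^ β ≤ (β / η) ^ β * e^{ηt}` uses up half of the decay `e^{-2ηt}`.
  set K := a * (β / η) ^ β + b
  have hpoint (t : ℝ) (ht : t ∈ Set.Ioi 0) :
      Real.exp (-2 * η * t) * (a * t ^ β + b) ≤ K * Real.exp (-η * t) := by
    have ht0 : (0 : ℝ) ≤ t := le_of_lt ht
    have hpow := ProbabilityTheory.rpow_abs_le_mul_exp_abs t hβ.le hη.ne'
    rw [abs_of_nonneg ht0, abs_of_pos hη] at hpow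
    have hexp : Real.exp (-2 * η * t) * Real.exp (η * t) = Real.exp (-η * t) := by
      rw [← Real.exp_add]; ring_nf
    have hdecay : Real.exp (-2 * η * t) ≤ Real.exp (-η * t) := by gcongr; nlinarith
    calc Real.exp (-2 * η * t) * (a * t ^ β + b)
        ≤ Real.exp (-2 * η * t) * (a * ((β / η) ^ β * Real.exp (η * t)) + b) := by gcongr
      _ = a * (β / η) ^ β * (Real.exp (-2 * η * t) * Real.exp (η * t)) +
          b * Real.exp (-2 * η * t) := by ring
      _ ≤ K * Real.exp (-η * t) := by rw [hexp]; nlinarith [Real.exp_pos (-η * t)]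
  have hint :
      ∫⁻ t in Set.Ioi 0, ENNReal.ofReal (K * Real.exp (-η * t)) = ENNReal.ofReal (K / η) := by
    rw [← ofReal_integral_eq_lintegral_ofReal, integral_const_mul, integral_exp_mul_Ioi
      (neg_lt_zero.2 hη)]
    · simp [div_eq_mul_inv]
    · exact (integrableOn_exp_mul_Ioi (neg_lt_zero.2 hη) 0).const_mul K
    · exact Filter.Eventually.of_forall fun t => by positivity
  calc _ ≤ ENNReal.ofReal (2 * η) *
          ∫⁻ t in Set.Ioi 0, ENNReal.ofReal (K * Real.exp (-η * t)) :=
        mul_le_mul_right (setLIntegral_mono' measurableSet_Ioi fun t ht =>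
          ENNReal.ofReal_le_ofReal (hpoint t ht)) _
    _ = ENNReal.ofReal (2 * (a * β ^ β * η ^ (-β) + b)) := by
        rw [hint, ← ENNReal.ofReal_mul (by linarith)]
        congr 1
        simp only [K]
        rw [Real.div_rpow hβ.le hη.le, Real.rpow_neg hη.le]
        field_simp
    _ ≤ _ := by
        have : 1 ≤ η ^ (-β) :=
          Real.one_le_rpow_of_pos_of_le_one_of_nonpos hη hη1 (by linarith)
        refine ENNReal.ofReal_le_ofReal ?_
        nlinarith [mul_le_mul_of_nonneg_left this hb]

/-- Ballistic upper bound on time-averaged moments: under the hypotheses of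
Statement 3, for every `β > 0` and vertex `u` there is `C < ∞` with
`Σ_x d(x,u)^β · 2η ∫₀^∞ e^{-2ηt} |⟨δ_x, e^{-itH} δ_u⟩|² dt ≤ C η^{-β}` for all `η ∈ (0,1]`. -/
theorem ballistic_upper_bound_moments
    {V : Type*} [Countable V] [DecidableEq V] (G : SimpleGraph V) (hG : G.Connected)
    (A : lp (fun _ : V => ℂ) 2 →L[ℂ] lp (fun _ : V => ℂ) 2) (hA : IsSelfAdjoint A)
    (v : V → ℝ) (hv : ∃ M : ℝ, ∀ x : V, |v x| ≤ M)
    (Mv : lp (fun _ : V => ℂ) 2 →L[ℂ] lp (fun _ : V => ℂ) 2)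
    (hMv : ∀ (ψ : lp (fun _ : V => ℂ) 2) (x : V), (Mv ψ) x = (v x : ℂ) * ψ x)
    (H : lp (fun _ : V => ℂ) 2 →L[ℂ] lp (fun _ : V => ℂ) 2) (hH : H = A + Mv)
    (hgfin : ∃ α : ℝ, 0 < α ∧ (⨆ x : V, ∑' y : V,
      ENNReal.ofReal (‖(inner ℂ (lp.single 2 x (1 : ℂ)) (A (lp.single 2 y (1 : ℂ))) : ℂ)‖ *
        Real.exp (α * G.dist x y))) ≠ ⊤)
    (β : ℝ) (hβ : 0 < β) (u : V) :
    ∃ C : ℝ, ∀ η : ℝ, η ∈ Set.Ioc (0 : ℝ) 1 →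
      ∑' x : V, ENNReal.ofReal ((G.dist x u : ℝ) ^ β *
          (2 * η * ∫ t in Set.Ioi (0 : ℝ), Real.exp (-2 * η * t) *
            ‖(inner ℂ (lp.single 2 x (1 : ℂ))
              ((NormedSpace.exp ((-(Complex.I * (t : ℂ))) • H)) (lp.single 2 u (1 : ℂ))) : ℂ)‖ ^ 2))
        ≤ ENNReal.ofReal (C * η ^ (-β)) := by
  obtain ⟨α, hα, hgA⟩ := hgfin
  obtain ⟨M, hM⟩ := hv
  have hHsa : IsSelfAdjoint H := hH ▸ hA.add (isSelfAdjoint_of_apply_eq_ofReal_mul hMv)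
  have hMvnorm : expColumnNorm G α Mv ≤ ENNReal.ofReal M :=
    expColumnNorm_le_of_apply_eq_mul hMv fun x => by simpa using hM x
  have hHfin : expColumnNorm G α H ≠ ⊤ := by
    have hle : expColumnNorm G α H ≤ expColumnNorm G α A + ENNReal.ofReal M := by
      rw [hH]
      exact (expColumnNorm_add_le A Mv).trans (add_le_add_right hMvnorm _)
    rw [expColumnNorm_eq_iSup_of_isSelfAdjoint hA] at hle
    exact ne_top_of_le_ne_top (ENNReal.add_ne_top.2 ⟨hgA, ENNReal.ofReal_ne_top⟩) hle
  set a := (2 * (expColumnNorm G α H).toReal / α) ^ β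
  set b := (2 * β / α) ^ β
  refine ⟨2 * (a * β ^ β + b), fun η ⟨hη0, hη1⟩ => ?_⟩
  refine (tsum_ofReal_mul_timeAverage_le (w := fun x => (G.dist x u : ℝ) ^ β)
    (F := fun x t => ‖matrixEntry (NormedSpace.exp ((-(I * t)) • H)) x u‖ ^ 2)
    (fun x => by positivity)
    (fun x => ((continuous_matrixEntry_exp_smul H x u).norm.pow 2).measurable)
    (fun x t => by positivity) hη0.le (m := fun t => a * t ^ β + b) fun t ht => ?_).trans
    (ofReal_mul_lintegral_exp_mul_rpow_add_le hη0 hη1 hβ (by positivity) (by positivity))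
  exact tsum_dist_rpow_mul_sq_matrixEntry_exp_le hG hα hβ hHsa hHfin u ht.le
end

section
/- Let (Ω, P) be a probability space and Y : Ω → ℂ a random variable with |Y| > 0 almost surely. For s ∈ ℝ write M(s) := E[|Y|^s]. Let s > 0 and α ≥ 0, and assume M(2+s+α) < ∞ and M(−s) < ∞. Then M(2) ∈ (0, ∞), M(2+s) < ∞, and M(2+s)/M(2) ≤ [ M(2+s+α)^s · M(−s)² ]^{1/(s+α)}. -/
/-!
By Hölder, `p ↦ log M(p)` is convex, which gives two three-point inequalities:
`M(0)^(2+s) ≤ M(-s)^2 M(2)^s`, whose left side is `1` (so also `M(2) > 0`), and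
`M(2+s)^(s+α) ≤ M(2)^α M(2+s+α)^s`. Multiplying them yields
`M(2+s)^(s+α) ≤ M(2+s+α)^s M(-s)^2 M(2)^(s+α)`, and taking `(s+α)`-th roots gives the bound.
Moments between `-s` and `2+s+α` are finite because `x^t ≤ x^a + x^b` for `a ≤ t ≤ b`.
-/

open MeasureTheory
open scoped ENNReal

namespace MeasureTheory

variable {Ω : Type*} [MeasurableSpace Ω] {μ : Measure Ω} {g : Ω → ℝ≥0∞}

lemma lintegral_ofReal_rpow_of_ae_pos {f : Ω → ℝ} (hf : ∀ᵐ ω ∂μ, 0 < f ω) (p : ℝ) :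
    ∫⁻ ω, ENNReal.ofReal (f ω ^ p) ∂μ = ∫⁻ ω, ENNReal.ofReal (f ω) ^ p ∂μ :=
  lintegral_congr_ae (hf.mono fun _ h => (ENNReal.ofReal_rpow_of_pos h).symm)

lemma lintegral_rpow_le_add (hg : AEMeasurable g μ) {a b t : ℝ} (hat : a ≤ t) (htb : t ≤ b) :
    ∫⁻ ω, g ω ^ t ∂μ ≤ ∫⁻ ω, g ω ^ a ∂μ + ∫⁻ ω, g ω ^ b ∂μ := by
  rw [← lintegral_add_left' (hg.pow_const a)]
  refine lintegral_mono fun ω => ?_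
  rcases le_total (g ω) 1 with hle | hge
  · exact (ENNReal.rpow_le_rpow_of_exponent_ge hle hat).trans le_self_add
  · exact (ENNReal.rpow_le_rpow_of_exponent_le hge htb).trans le_add_self

variable (hg : AEMeasurable g μ) (hg0 : ∀ᵐ ω ∂μ, g ω ≠ 0)
  (hgtop : ∀ᵐ ω ∂μ, g ω ≠ ⊤)
include hg hg0 hgtop

lemma lintegral_rpow_convex_comb_le {a b t : ℝ} (ht0 : 0 < t) (ht1 : t < 1) :
    ∫⁻ ω, g ω ^ (t * a + (1 - t) * b) ∂μ ≤
      (∫⁻ ω, g ω ^ a ∂μ) ^ t * (∫⁻ ω, g ω ^ b ∂μ) ^ (1 - t) := by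
  have hpq : Real.HolderConjugate (1 / t) (1 / (1 - t)) :=
    Real.holderConjugate_one_div ht0 (sub_pos.2 ht1) (by ring)
  have hsplit : ∀ᵐ ω ∂μ,
      g ω ^ (t * a + (1 - t) * b) = g ω ^ (t * a) * g ω ^ ((1 - t) * b) :=
    (hg0.and hgtop).mono fun ω h => ENNReal.rpow_add _ _ h.1 h.2
  have hroot : ∀ (c : ℝ) {r : ℝ}, r ≠ 0 → ∀ ω, (g ω ^ (r * c)) ^ (1 / r) = g ω ^ c :=
    fun c r hr ω => by rw [← ENNReal.rpow_mul]; field_simp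
  calc ∫⁻ ω, g ω ^ (t * a + (1 - t) * b) ∂μ
      = ∫⁻ ω, ((fun ω => g ω ^ (t * a)) * fun ω => g ω ^ ((1 - t) * b)) ω ∂μ :=
        lintegral_congr_ae hsplit
    _ ≤ (∫⁻ ω, (g ω ^ (t * a)) ^ (1 / t) ∂μ) ^ (1 / (1 / t)) *
          (∫⁻ ω, (g ω ^ ((1 - t) * b)) ^ (1 / (1 - t)) ∂μ) ^ (1 / (1 / (1 - t))) :=
        ENNReal.lintegral_mul_le_Lp_mul_Lq μ hpq (hg.pow_const _) (hg.pow_const _)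
    _ = (∫⁻ ω, g ω ^ a ∂μ) ^ t * (∫⁻ ω, g ω ^ b ∂μ) ^ (1 - t) := by
        simp only [hroot a ht0.ne', hroot b (sub_pos.2 ht1).ne', one_div_one_div]

lemma lintegral_rpow_add_rpow_le_mul {a u v : ℝ} (hu : 0 ≤ u) (hv : 0 ≤ v) :
    (∫⁻ ω, g ω ^ (a + u) ∂μ) ^ (u + v) ≤
      (∫⁻ ω, g ω ^ a ∂μ) ^ v * (∫⁻ ω, g ω ^ (a + u + v) ∂μ) ^ u := by
  rcases hu.eq_or_lt with rfl | hu
  · simp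
  rcases hv.eq_or_lt with rfl | hv
  · simp
  have huv : 0 < u + v := by positivity
  have ht1 : 1 - v / (u + v) = u / (u + v) := by field_simp; ring
  have key := lintegral_rpow_convex_comb_le hg hg0 hgtop (a := a) (b := a + u + v)
    (by positivity : 0 < v / (u + v)) (by rw [div_lt_one huv]; linarith)
  rw [ht1, show v / (u + v) * a + u / (u + v) * (a + u + v) = a + u by field_simp; ring] at key
  calc (∫⁻ ω, g ω ^ (a + u) ∂μ) ^ (u + v)
      ≤ ((∫⁻ ω, g ω ^ a ∂μ) ^ (v / (u + v)) *
          (∫⁻ ω, g ω ^ (a + u + v) ∂μ) ^ (u / (u + v))) ^ (u + v) :=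
        ENNReal.rpow_le_rpow key huv.le
    _ = (∫⁻ ω, g ω ^ a ∂μ) ^ v * (∫⁻ ω, g ω ^ (a + u + v) ∂μ) ^ u := by
        rw [ENNReal.mul_rpow_of_nonneg _ _ huv.le, ← ENNReal.rpow_mul, ← ENNReal.rpow_mul,
          div_mul_cancel₀ _ huv.ne', div_mul_cancel₀ _ huv.ne']

end MeasureTheory

/-- Interpolation bound for moments: for a random variable `Y` with `|Y| > 0`
a.s. and `M(s) := E[|Y|^s]`, if `s > 0`, `α ≥ 0`, `M(2+s+α) < ∞` and `M(−s) < ∞`, then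
`M(2) ∈ (0,∞)`, `M(2+s) < ∞` and `M(2+s)/M(2) ≤ [M(2+s+α)^s · M(−s)²]^{1/(s+α)}`. -/
theorem moment_interpolation_bound
    {Ω : Type*} [MeasurableSpace Ω] (P : Measure Ω) [IsProbabilityMeasure P]
    (Y : Ω → ℂ) (hY : AEMeasurable Y P) (hpos : ∀ᵐ ω ∂P, Y ω ≠ 0)
    (M : ℝ → ℝ≥0∞) (hM : ∀ s : ℝ, M s = ∫⁻ ω, ENNReal.ofReal (‖Y ω‖ ^ s) ∂P)
    (s α : ℝ) (hs : 0 < s) (hα : 0 ≤ α)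
    (h1 : M (2 + s + α) ≠ ⊤) (h2 : M (-s) ≠ ⊤) :
    0 < M 2 ∧ M 2 ≠ ⊤ ∧ M (2 + s) ≠ ⊤ ∧
      M (2 + s) / M 2 ≤ (M (2 + s + α) ^ s * M (-s) ^ 2) ^ (1 / (s + α)) := by
  have hnorm : ∀ᵐ ω ∂P, 0 < ‖Y ω‖ := hpos.mono fun _ => norm_pos_iff.mpr
  have hMG : ∀ t, M t = ∫⁻ ω, ENNReal.ofReal ‖Y ω‖ ^ t ∂P := fun t =>
    (hM t).trans (lintegral_ofReal_rpow_of_ae_pos hnorm t)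
  have hG : AEMeasurable (fun ω => ENNReal.ofReal ‖Y ω‖) P := hY.norm.ennreal_ofReal
  have hG0 : ∀ᵐ ω ∂P, ENNReal.ofReal ‖Y ω‖ ≠ 0 :=
    hnorm.mono fun _ h => ENNReal.ofReal_pos.2 h |>.ne'
  have hGtop : ∀ᵐ ω ∂P, ENNReal.ofReal ‖Y ω‖ ≠ ⊤ :=
    ae_of_all _ fun _ => ENNReal.ofReal_ne_top
  have hfin : ∀ t, -s ≤ t → t ≤ 2 + s + α → M t ≠ ⊤ := fun t hlo hhi => by
    rw [hMG] at h1 h2 ⊢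
    exact ne_top_of_le_ne_top (ENNReal.add_ne_top.2 ⟨h2, h1⟩) (lintegral_rpow_le_add hG hlo hhi)
  have hlow : 1 ≤ M (-s) ^ 2 * M 2 ^ s := by
    have := lintegral_rpow_add_rpow_le_mul hG hG0 hGtop (a := -s) hs.le zero_le_two
    rw [neg_add_cancel, zero_add, ← hMG (-s), ← hMG 2] at this
    simpa only [ENNReal.rpow_zero, lintegral_const, measure_univ, mul_one, ENNReal.one_rpow,
      ENNReal.rpow_ofNat] using this
  have hup : M (2 + s) ^ (s + α) ≤ M 2 ^ α * M (2 + s + α) ^ s := by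
    simpa only [hMG] using lintegral_rpow_add_rpow_le_mul hG hG0 hGtop (a := 2) hs.le hα
  have hM2 : M 2 ≠ 0 := fun h => by simp [h, ENNReal.zero_rpow_of_pos hs] at hlow
  have hM2top : M 2 ≠ ⊤ := hfin 2 (by linarith) (by linarith)
  have hsα : 0 < s + α := by linarith
  refine ⟨pos_iff_ne_zero.2 hM2, hM2top, hfin (2 + s) (by linarith) (by linarith), ?_⟩
  rw [one_div, ENNReal.le_rpow_inv_iff hsα, ENNReal.div_rpow_of_nonneg _ _ hsα.le,
    ENNReal.div_le_iff (ENNReal.rpow_pos (pos_iff_ne_zero.2 hM2) hM2top).ne'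
      (ENNReal.rpow_ne_top_of_nonneg hsα.le hM2top)]
  calc M (2 + s) ^ (s + α)
      ≤ M 2 ^ α * M (2 + s + α) ^ s * (M (-s) ^ 2 * M 2 ^ s) :=
        hup.trans (le_mul_of_one_le_right' hlow)
    _ = M (2 + s + α) ^ s * M (-s) ^ 2 * M 2 ^ (s + α) := by
        rw [ENNReal.rpow_add _ _ hM2 hM2top]; ring
end

section
/- Let (Ω, P) be a probability space, K a positive integer, and let X : Ω → ℝ, g : Ω → ℝ, and Y₁, …, Y_K : Ω → ℝ be random variables such that each Y_v ≥ 0 almost surely, Y₁, …, Y_K are mutually independent and identically distributed, and X ≥ g² · (Y₁ + ⋯ + Y_K) almost surely. Then for all x > 0 and y > 0: P(X ≤ x) ≤ P(Y₁ ≤ x · y^{-2})^K + P(|g| ≤ y). -/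
open MeasureTheory ProbabilityTheory
open scoped ENNReal

/-! On the event `|g| > y` the domination `g² ∑ Yᵥ ≤ X ≤ x` and `Yᵥ ≥ 0` force every `Yᵥ ≤ x y⁻²`,
and by independence and identical distribution that intersection has probability
`P(Y₁ ≤ x y⁻²)^K`; a union bound with the event `|g| ≤ y` concludes. -/

theorem ProbabilityTheory.iIndepFun.measure_iInter_preimage_eq_pow {Ω ι β : Type*} [MeasurableSpace Ω]
    [MeasurableSpace β] [Fintype ι] {μ : Measure Ω} {Y : ι → Ω → β} {Z : Ω → β}
    (hindep : iIndepFun Y μ) (hident : ∀ i, IdentDistrib (Y i) Z μ μ) {s : Set β}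
    (hs : MeasurableSet s) :
    μ (⋂ i, Y i ⁻¹' s) = μ (Z ⁻¹' s) ^ Fintype.card ι := by
  have hprod := hindep.measure_inter_preimage_eq_mul Finset.univ (sets := fun _ => s)
    fun _ _ => hs
  simp only [Finset.mem_univ, Set.iInter_true] at hprod
  simp only [hprod, fun i => (hident i).measure_mem_eq hs, Finset.prod_const, Finset.card_univ]

theorem le_mul_inv_sq_of_sq_mul_le {a g x y : ℝ} (hx : 0 ≤ x) (hy : 0 < y) (hgy : y < |g|)
    (h : g ^ 2 * a ≤ x) : a ≤ x * y⁻¹ ^ 2 := by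
  have hy2 : y ^ 2 < g ^ 2 := by simpa only [sq_abs] using pow_lt_pow_left₀ hgy hy.le two_ne_zero
  have hg2 : 0 < g ^ 2 := (pow_pos hy 2).trans hy2
  calc a ≤ x / g ^ 2 := (le_div_iff₀' hg2).2 h
    _ ≤ x / y ^ 2 := div_le_div_of_nonneg_left hx (pow_pos hy 2) hy2.le
    _ = x * y⁻¹ ^ 2 := by rw [div_eq_mul_inv, inv_pow]

theorem recursion_distribution_bound_general
    {Ω : Type*} [MeasurableSpace Ω] (P : Measure Ω) [IsProbabilityMeasure P]
    (K : ℕ) (hK : 0 < K)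
    (X g : Ω → ℝ) (Y : Fin K → Ω → ℝ)
    (hYnn : ∀ v, ∀ᵐ ω ∂P, 0 ≤ Y v ω)
    (hindep : iIndepFun Y P)
    (hident : ∀ v, IdentDistrib (Y v) (Y ⟨0, hK⟩) P P)
    (hdom : ∀ᵐ ω ∂P, g ω ^ 2 * (∑ v, Y v ω) ≤ X ω)
    (x y : ℝ) (hx : 0 < x) (hy : 0 < y) :
    P {ω | X ω ≤ x} ≤ P {ω | Y ⟨0, hK⟩ ω ≤ x * y⁻¹ ^ 2} ^ K + P {ω | |g ω| ≤ y} := by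
  have hcover : {ω | X ω ≤ x} ≤ᵐ[P]
      ((⋂ v, Y v ⁻¹' Set.Iic (x * y⁻¹ ^ 2)) ∪ {ω | |g ω| ≤ y} : Set Ω) := by
    filter_upwards [ae_all_iff.2 hYnn, hdom] with ω hnn hd (hX : X ω ≤ x)
    refine (le_or_gt |g ω| y).symm.imp_left fun hgy => Set.mem_iInter.2 fun v => ?_
    refine le_mul_inv_sq_of_sq_mul_le hx.le hy hgy (le_trans ?_ (hd.trans hX))
    exact mul_le_mul_of_nonneg_left (Finset.single_le_sum (fun u _ => hnn u)
      (Finset.mem_univ v)) (sq_nonneg _)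
  calc P {ω | X ω ≤ x}
      ≤ P ((⋂ v, Y v ⁻¹' Set.Iic (x * y⁻¹ ^ 2)) ∪ {ω | |g ω| ≤ y}) := measure_mono_ae hcover
    _ ≤ P (⋂ v, Y v ⁻¹' Set.Iic (x * y⁻¹ ^ 2)) + P {ω | |g ω| ≤ y} := measure_union_le _ _
    _ = P {ω | Y ⟨0, hK⟩ ω ≤ x * y⁻¹ ^ 2} ^ K + P {ω | |g ω| ≤ y} := by
      rw [hindep.measure_iInter_preimage_eq_pow hident measurableSet_Iic, Fintype.card_fin]
      rfl

/-- If `X ≥ g²(Y₁ + ⋯ + Y_K)` a.s. with `Y₁,…,Y_K ≥ 0` i.i.d., then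
`P(X ≤ x) ≤ P(Y₁ ≤ x y⁻²)^K + P(|g| ≤ y)` for all `x, y > 0`. -/
theorem recursion_distribution_bound
    {Ω : Type*} [MeasurableSpace Ω] (P : Measure Ω) [IsProbabilityMeasure P]
    (K : ℕ) (hK : 0 < K)
    (X g : Ω → ℝ) (Y : Fin K → Ω → ℝ)
    (hYmeas : ∀ v, Measurable (Y v))
    (hYnn : ∀ v, ∀ᵐ ω ∂P, 0 ≤ Y v ω)
    (hindep : iIndepFun Y P)
    (hident : ∀ v, IdentDistrib (Y v) (Y ⟨0, hK⟩) P P)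
    (hdom : ∀ᵐ ω ∂P, g ω ^ 2 * (∑ v, Y v ω) ≤ X ω)
    (x y : ℝ) (hx : 0 < x) (hy : 0 < y) :
    P {ω | X ω ≤ x} ≤ P {ω | Y ⟨0, hK⟩ ω ≤ x * y⁻¹ ^ 2} ^ K + P {ω | |g ω| ≤ y} :=
  recursion_distribution_bound_general P K hK X g Y hYnn hindep hident hdom x y hx hy
end

section
/- Let (Ω, P) be a probability space, K a positive integer, let V : Ω → ℝ be a random variable whose law is absolutely continuous with respect to Lebesgue measure with essentially bounded density ρ, and let Γ₁, …, Γ_K : Ω → ℂ be random variables which are mutually independent, independent of V, identically distributed, and satisfy Im Γ_v ≥ 0 almost surely. Let ζ ∈ ℂ with Im ζ ≥ 0. Then for all x > 0: P( |V − ζ − (Γ₁ + ⋯ + Γ_K)| ≤ x ) ≤ 2 ‖ρ‖_∞ · x · P( Im Γ₁ ≤ x )^K. -/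
/-!
Since `Im ζ ≥ 0` and every `Im Γ_v ≥ 0`, the event `|V − ζ − ΣΓ| ≤ x` forces both
`|V − Re (ζ + ΣΓ)| ≤ x` and `Im Γ_v ≤ x` for every `v`. Conditionally on `Γ`, the first condition
puts `V` in an interval of length `2x`, which has probability at most `2 ‖ρ‖_∞ x` because `V` is
independent of `Γ`; the second has probability `P(Im Γ₁ ≤ x)^K` by the i.i.d. assumption.
-/

open MeasureTheory ProbabilityTheory
open scoped ENNReal

lemma withDensity_apply_le_essSup_mul {α : Type*} [MeasurableSpace α] (μ : Measure α) [SFinite μ]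
    (f : α → ℝ≥0∞) (s : Set α) : μ.withDensity f s ≤ essSup f μ * μ s := by
  rw [withDensity_apply' f s, ← setLIntegral_const]
  exact lintegral_mono_ae (ae_restrict_of_ae (ENNReal.ae_le_essSup f))

lemma withDensity_Icc_le_essSup_mul (f : ℝ → ℝ≥0∞) (a x : ℝ) :
    (volume : Measure ℝ).withDensity f (Set.Icc (a - x) (a + x))
      ≤ essSup f volume * ENNReal.ofReal (2 * x) := by
  convert withDensity_apply_le_essSup_mul volume f _ using 3
  rw [Real.volume_Icc]
  ring_nf

lemma Complex.abs_re_sub_le_and_im_le_of_norm_ofReal_sub_le {a x : ℝ} {w : ℂ} (hw : 0 ≤ w.im)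
    (h : ‖(a : ℂ) - w‖ ≤ x) : |a - w.re| ≤ x ∧ w.im ≤ x := by
  constructor
  · simpa using (Complex.abs_re_le_norm _).trans h
  · simpa [abs_of_nonneg hw] using (Complex.abs_im_le_norm _).trans h

lemma ProbabilityTheory.IndepFun.measure_abs_sub_le_and_mem_le {Ω β : Type*} [MeasurableSpace Ω]
    [MeasurableSpace β] {P : Measure Ω} [IsProbabilityMeasure P] {V : Ω → ℝ} {W : Ω → β}
    (hV : Measurable V) (hW : Measurable W) (hVW : IndepFun V W P) {c : β → ℝ}
    (hc : Measurable c) {A : Set β} (hA : MeasurableSet A) {x : ℝ} {B : ℝ≥0∞}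
    (hB : ∀ a, P.map V (Set.Icc (a - x) (a + x)) ≤ B) :
    P {ω | |V ω - c (W ω)| ≤ x ∧ W ω ∈ A} ≤ B * P (W ⁻¹' A) := by
  have : IsProbabilityMeasure (P.map V) := Measure.isProbabilityMeasure_map hV.aemeasurable
  have : IsProbabilityMeasure (P.map W) := Measure.isProbabilityMeasure_map hW.aemeasurable
  set S : Set (ℝ × β) := {p | |p.1 - c p.2| ≤ x ∧ p.2 ∈ A}
  have hS : MeasurableSet S :=
    (measurableSet_le (measurable_fst.sub (hc.comp measurable_snd)).abs measurable_const).inter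
      (hA.preimage measurable_snd)
  have hslice : ∀ b, P.map V ((fun a => (a, b)) ⁻¹' S) ≤ A.indicator (fun _ => B) b := by
    intro b
    by_cases hb : b ∈ A
    · have hIcc : (fun a => (a, b)) ⁻¹' S = Set.Icc (c b - x) (c b + x) := by
        ext a
        simp only [S, Set.mem_preimage, Set.mem_ofPred_eq, hb, and_true, Set.mem_Icc, abs_le]
        constructor <;> rintro ⟨h₁, h₂⟩ <;> constructor <;> linarith
      rw [hIcc, Set.indicator_of_mem hb]
      exact hB _
    · have hempty : (fun a => (a, b)) ⁻¹' S = ∅ := by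
        ext a
        simp [S, hb]
      simp [hempty]
  have hjoint : P.map (fun ω => (V ω, W ω)) = (P.map V).prod (P.map W) :=
    (indepFun_iff_map_prod_eq_prod_map_map hV.aemeasurable hW.aemeasurable).1 hVW
  calc P {ω | |V ω - c (W ω)| ≤ x ∧ W ω ∈ A}
      = (P.map V).prod (P.map W) S := by
        rw [← hjoint, Measure.map_apply (hV.prodMk hW) hS]
        rfl
    _ = ∫⁻ b, P.map V ((fun a => (a, b)) ⁻¹' S) ∂(P.map W) := Measure.prod_apply_symm hS
    _ ≤ ∫⁻ b, A.indicator (fun _ => B) b ∂(P.map W) := lintegral_mono hslice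
    _ = B * P (W ⁻¹' A) := by
        rw [lintegral_indicator hA, setLIntegral_const, Measure.map_apply hW hA]

lemma ProbabilityTheory.iIndepFun.measure_forall_mem_eq_pow {Ω ι β : Type*} [MeasurableSpace Ω]
    [Fintype ι] [MeasurableSpace β] {P : Measure Ω} [IsProbabilityMeasure P] {Γ : ι → Ω → β}
    (hindep : iIndepFun Γ P) {i₀ : ι} (hident : ∀ i, IdentDistrib (Γ i) (Γ i₀) P P)
    {B : Set β} (hB : MeasurableSet B) :
    P ((fun ω i => Γ i ω) ⁻¹' Set.univ.pi fun _ => B) = P (Γ i₀ ⁻¹' B) ^ Fintype.card ι := by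
  have hinter :
      (fun ω i => Γ i ω) ⁻¹' Set.univ.pi (fun _ => B) = ⋂ i ∈ Finset.univ, Γ i ⁻¹' B := by
    ext ω
    simp
  rw [hinter, hindep.measure_inter_preimage_eq_mul Finset.univ fun _ _ => hB,
    Finset.prod_congr rfl fun i _ => (hident i).measure_mem_eq hB, Finset.prod_const,
    Finset.card_univ]

theorem green_function_small_value_bound_general
    {Ω : Type*} [MeasurableSpace Ω] (P : Measure Ω) [IsProbabilityMeasure P]
    (K : ℕ) (hK : 0 < K)
    (ρ : ℝ → ℝ)
    (Vp : Ω → ℝ) (hVp : Measurable Vp)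
    (hlaw : P.map Vp = (volume : Measure ℝ).withDensity (fun v => ENNReal.ofReal (ρ v)))
    (Γ : Fin K → Ω → ℂ) (hΓmeas : ∀ v, Measurable (Γ v))
    (hΓim : ∀ v, ∀ᵐ ω ∂P, 0 ≤ (Γ v ω).im)
    (hindep : iIndepFun Γ P)
    (hident : ∀ v, IdentDistrib (Γ v) (Γ ⟨0, hK⟩) P P)
    (hVindep : IndepFun Vp (fun ω => fun v => Γ v ω) P)
    (ζ : ℂ) (hζ : 0 ≤ ζ.im) (x : ℝ) :
    P {ω | ‖(Vp ω : ℂ) - ζ - ∑ v, Γ v ω‖ ≤ x}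
      ≤ 2 * essSup (fun v => ENNReal.ofReal (ρ v)) (volume : Measure ℝ)
          * ENNReal.ofReal x * P {ω | (Γ ⟨0, hK⟩ ω).im ≤ x} ^ K := by
  set W : Ω → Fin K → ℂ := fun ω v => Γ v ω
  set c : (Fin K → ℂ) → ℝ := fun γ => (ζ + ∑ v, γ v).re
  set B : Set ℂ := {z | z.im ≤ x}
  have hB : MeasurableSet B := measurableSet_le Complex.measurable_im measurable_const
  have hevent : ∀ᵐ ω ∂P, ‖(Vp ω : ℂ) - ζ - ∑ v, Γ v ω‖ ≤ x →
      |Vp ω - c (W ω)| ≤ x ∧ W ω ∈ Set.univ.pi fun _ => B := by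
    filter_upwards [ae_all_iff.2 hΓim] with ω him hω
    have hsum_nonneg : 0 ≤ ∑ v, (Γ v ω).im := Finset.sum_nonneg fun v _ => him v
    have hsum_im : ∀ v, (Γ v ω).im ≤ (ζ + ∑ v, Γ v ω).im := fun v => by
      simpa [Complex.im_sum] using
        add_le_add hζ (Finset.single_le_sum (fun v _ => him v) (Finset.mem_univ v))
    rw [sub_sub] at hω
    obtain ⟨hre, him_le⟩ := Complex.abs_re_sub_le_and_im_le_of_norm_ofReal_sub_le
      (by simpa [Complex.im_sum] using add_nonneg hζ hsum_nonneg) hω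
    exact ⟨hre, fun v _ => (hsum_im v).trans him_le⟩
  calc P {ω | ‖(Vp ω : ℂ) - ζ - ∑ v, Γ v ω‖ ≤ x}
      ≤ P {ω | |Vp ω - c (W ω)| ≤ x ∧ W ω ∈ Set.univ.pi fun _ => B} := measure_mono_ae hevent
    _ ≤ essSup (fun v => ENNReal.ofReal (ρ v)) volume * ENNReal.ofReal (2 * x)
          * P (W ⁻¹' Set.univ.pi fun _ => B) :=
        hVindep.measure_abs_sub_le_and_mem_le (c := c) hVp (measurable_pi_lambda _ hΓmeas)
          (by fun_prop) (MeasurableSet.univ_pi fun _ => hB)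
          fun a => hlaw ▸ withDensity_Icc_le_essSup_mul _ a x
    _ = 2 * essSup (fun v => ENNReal.ofReal (ρ v)) volume * ENNReal.ofReal x
          * P (Γ ⟨0, hK⟩ ⁻¹' B) ^ K := by
        rw [hindep.measure_forall_mem_eq_pow hident hB, Fintype.card_fin,
          ENNReal.ofReal_mul zero_le_two, ENNReal.ofReal_ofNat]
        ring

/-- If `V` has a bounded density `ρ`, `Γ₁,…,Γ_K` are i.i.d. with nonnegative
imaginary parts and independent of `V`, and `Im ζ ≥ 0`, then
`P(|V − ζ − ΣΓ| ≤ x) ≤ 2 ‖ρ‖_∞ x · P(Im Γ₁ ≤ x)^K`. -/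
theorem green_function_small_value_bound
    {Ω : Type*} [MeasurableSpace Ω] (P : Measure Ω) [IsProbabilityMeasure P]
    (K : ℕ) (hK : 0 < K)
    (ρ : ℝ → ℝ) (hρmeas : Measurable ρ) (hρnn : ∀ v, 0 ≤ ρ v)
    (hρbdd : essSup (fun v => ENNReal.ofReal (ρ v)) (volume : Measure ℝ) ≠ ⊤)
    (Vp : Ω → ℝ) (hVp : Measurable Vp)
    (hlaw : P.map Vp = (volume : Measure ℝ).withDensity (fun v => ENNReal.ofReal (ρ v)))
    (Γ : Fin K → Ω → ℂ) (hΓmeas : ∀ v, Measurable (Γ v))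
    (hΓim : ∀ v, ∀ᵐ ω ∂P, 0 ≤ (Γ v ω).im)
    (hindep : iIndepFun Γ P)
    (hident : ∀ v, IdentDistrib (Γ v) (Γ ⟨0, hK⟩) P P)
    (hVindep : IndepFun Vp (fun ω => fun v => Γ v ω) P)
    (ζ : ℂ) (hζ : 0 ≤ ζ.im) (x : ℝ) (hx : 0 < x) :
    P {ω | ‖(Vp ω : ℂ) - ζ - ∑ v, Γ v ω‖ ≤ x}
      ≤ 2 * essSup (fun v => ENNReal.ofReal (ρ v)) (volume : Measure ℝ)
          * ENNReal.ofReal x * P {ω | (Γ ⟨0, hK⟩ ω).im ≤ x} ^ K :=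
  green_function_small_value_bound_general P K hK ρ Vp hVp hlaw Γ hΓmeas hΓim hindep hident hVindep
    ζ hζ x
end

section
/- Let K ≥ 2 be an integer and C > 0, and let F : (0, ∞) → ℝ be nondecreasing with 0 ≤ F(x) ≤ 1 for all x, F(x) → 0 as x ↓ 0, and F(x²) ≤ 3 · max{ F(x)^K , C √x } for all x ∈ (0, 1]. Then there exist α > 0 and x₀ ∈ (0, 1) such that F(x) ≤ x^α / 3 for all x ∈ (0, x₀]. -/
/-!
Fix `x₀` so small that `F ≤ 1/6` and `9 C x^{1/4} ≤ 1` on `(0, x₀]`, and `α ≤ 1/8` so small that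
`x^α ≥ 1/2` on `[x₀², x₀]`. The bound `F x ≤ x^α / 3` then holds on `[x₀², x₀]`, and it survives
`x ↦ x²`: the term `3 F(x)^K ≤ 3 (x^α/3)^2` gains the factor `x^α` that squaring the argument
costs, and `3 C √x` is tiny because `α ≤ 1/8`. Iterating the square root from any `x ∈ (0, x₀]`
lands in `[x₀², x₀]`.
-/

open Filter Set
open scoped Topology

theorem forall_mem_Ioc_of_mem_Icc_sq {P : ℝ → Prop} {x₀ : ℝ} (hx₀ : x₀ ∈ Ioo 0 1)
    (hbase : ∀ x ∈ Icc (x₀ ^ 2) x₀, P x) (hsq : ∀ y ∈ Ioc 0 x₀, P y → P (y ^ 2)) :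
    ∀ x ∈ Ioc 0 x₀, P x := by
  obtain ⟨hx₀0, hx₀1⟩ := hx₀
  have hlevel : ∀ n : ℕ, ∀ x ∈ Icc (x₀ ^ 2 ^ n) x₀, P x := by
    intro n
    induction n with
    | zero =>
      rintro x ⟨hlow, hx⟩
      rw [pow_zero, pow_one] at hlow
      exact hbase x ⟨by nlinarith, hx⟩
    | succ n ih =>
      rintro x ⟨hlow, hx⟩
      rcases le_or_gt (x₀ ^ 2) x with hbig | hsmall
      · exact hbase x ⟨hbig, hx⟩
      have hx0 : 0 < x := lt_of_lt_of_le (by positivity) hlow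
      have hsqrt_le : √x ≤ x₀ := by
        simpa [Real.sqrt_sq hx₀0.le] using (Real.sqrt_lt_sqrt hx0.le hsmall).le
      have hsqrt_ge : x₀ ^ 2 ^ n ≤ √x := by
        refine Real.le_sqrt_of_sq_le ?_
        rwa [← pow_mul, ← pow_succ]
      simpa [Real.sq_sqrt hx0.le] using
        hsq (√x) ⟨Real.sqrt_pos.mpr hx0, hsqrt_le⟩ (ih (√x) ⟨hsqrt_ge, hsqrt_le⟩)
  rintro x ⟨hx0, hx⟩
  obtain ⟨m, hm⟩ := exists_pow_lt_of_lt_one hx0 hx₀1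
  exact hlevel m x ⟨(pow_le_pow_of_le_one hx₀0.le hx₀1.le Nat.lt_two_pow_self.le).trans hm.le, hx⟩

theorem pow_le_sq_div_nine {K : ℕ} (hK : 2 ≤ K) {a b : ℝ} (ha : 0 ≤ a) (hab : a ≤ b / 3)
    (hb : b ≤ 1) : a ^ K ≤ b ^ 2 / 9 :=
  calc a ^ K ≤ a ^ 2 := pow_le_pow_of_le_one ha (by linarith) hK
    _ ≤ (b / 3) ^ 2 := pow_le_pow_left₀ ha hab 2
    _ = b ^ 2 / 9 := by ring

theorem mul_sqrt_le_rpow_div_nine {C α y : ℝ} (hα : α ≤ 1 / 8) (hy : y ∈ Ioc 0 1)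
    (hCy : 9 * C * y ^ (1 / 4 : ℝ) ≤ 1) : C * √y ≤ y ^ (2 * α) / 9 := by
  obtain ⟨hy0, hy1⟩ := hy
  have hsqrt : √y = y ^ (1 / 4 : ℝ) * y ^ (1 / 4 : ℝ) := by
    rw [Real.sqrt_eq_rpow, ← Real.rpow_add hy0]; norm_num
  have hquarter : y ^ (1 / 4 : ℝ) ≤ y ^ (2 * α) :=
    Real.rpow_le_rpow_of_exponent_ge hy0 hy1 (by linarith)
  have : 9 * C * √y ≤ y ^ (1 / 4 : ℝ) := by
    rw [hsqrt, ← mul_assoc]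
    exact mul_le_of_le_one_left (by positivity) hCy
  linarith

/-- One squaring step of the recursion `F(x²) ≤ 3 max{F(x)^K, C√x}` preserves `F x ≤ x^α / 3`. -/
theorem max_pow_mul_sqrt_le {K : ℕ} (hK : 2 ≤ K) {C α a y : ℝ} (hα0 : 0 ≤ α) (hα : α ≤ 1 / 8)
    (hy : y ∈ Ioc 0 1) (hCy : 9 * C * y ^ (1 / 4 : ℝ) ≤ 1) (ha : 0 ≤ a) (hay : a ≤ y ^ α / 3) :
    3 * max (a ^ K) (C * √y) ≤ (y ^ 2) ^ α / 3 := by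
  have hyα : y ^ α ≤ 1 := Real.rpow_le_one hy.1.le hy.2 hα0
  have hsq : (y ^ 2) ^ α = y ^ (2 * α) := by
    rw [← Real.rpow_natCast, ← Real.rpow_mul hy.1.le]; norm_num
  have hpow : (y ^ α) ^ 2 = y ^ (2 * α) := by rw [Real.rpow_pow_comm hy.1.le, hsq]
  have := max_le (hpow ▸ pow_le_sq_div_nine hK ha hay hyα) (mul_sqrt_le_rpow_div_nine hα hy hCy)
  rw [hsq]
  linarith

/-- A-priori power law: if `F : (0,∞) → [0,1]` is nondecreasing, tends to `0`
at `0⁺`, and satisfies `F(x²) ≤ 3 max{F(x)^K, C√x}` on `(0,1]` for some integer `K ≥ 2` and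
`C > 0`, then there are `α > 0` and `x₀ ∈ (0,1)` with `F(x) ≤ x^α/3` on `(0, x₀]`. -/
theorem apriori_power_law
    (K : ℕ) (hK : 2 ≤ K) (C : ℝ) (hC : 0 < C)
    (F : ℝ → ℝ)
    (hmono : ∀ x y : ℝ, 0 < x → x ≤ y → F x ≤ F y)
    (hF01 : ∀ x : ℝ, 0 < x → F x ∈ Set.Icc (0 : ℝ) 1)
    (hlim : Tendsto F (𝓝[>] (0 : ℝ)) (𝓝 0))
    (hrec : ∀ x : ℝ, x ∈ Set.Ioc (0 : ℝ) 1 →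
      F (x ^ 2) ≤ 3 * max (F x ^ K) (C * Real.sqrt x)) :
    ∃ α : ℝ, 0 < α ∧ ∃ x₀ ∈ Set.Ioo (0 : ℝ) 1,
      ∀ x ∈ Set.Ioc (0 : ℝ) x₀, F x ≤ x ^ α / 3 := by
  have hquarter : Tendsto (fun x : ℝ ↦ 9 * C * x ^ (1 / 4 : ℝ)) (𝓝[>] 0) (𝓝 0) := by
    have := ((Real.continuousAt_rpow_const 0 (1 / 4) (by norm_num)).tendsto.const_mul (9 * C))
    simpa using this.mono_left nhdsWithin_le_nhds
  obtain ⟨x₀, hFx₀, hCx₀, hx₀0, hx₀1⟩ : ∃ x₀, F x₀ < 1 / 6 ∧ 9 * C * x₀ ^ (1 / 4 : ℝ) < 1 ∧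
      x₀ ∈ Ioo 0 1 :=
    ((hlim.eventually_lt_const (by norm_num)).and <| (hquarter.eventually_lt_const one_pos).and <|
      Ioo_mem_nhdsGT one_pos).exists
  have hpow_zero : Tendsto (fun α : ℝ ↦ (x₀ ^ 2) ^ α) (𝓝[>] 0) (𝓝 1) := by
    simpa using ((Real.continuousAt_const_rpow (by positivity)).tendsto (x := (0 : ℝ))).mono_left
      nhdsWithin_le_nhds
  obtain ⟨α, hαx₀, hα0, hα8⟩ : ∃ α : ℝ, 1 / 2 < (x₀ ^ 2) ^ α ∧ α ∈ Ioo 0 (1 / 8) :=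
    ((hpow_zero.eventually_const_lt (by norm_num)).and (Ioo_mem_nhdsGT (by norm_num))).exists
  refine ⟨α, hα0, x₀, ⟨hx₀0, hx₀1⟩, forall_mem_Ioc_of_mem_Icc_sq ⟨hx₀0, hx₀1⟩ ?_ ?_⟩
  · rintro x ⟨hlow, hx⟩
    have := Real.rpow_le_rpow (by positivity) hlow hα0.le
    linarith [hmono x x₀ (lt_of_lt_of_le (by positivity) hlow) hx]
  · rintro y ⟨hy0, hy⟩ hFy
    have hCy : 9 * C * y ^ (1 / 4 : ℝ) ≤ 1 :=
      calc 9 * C * y ^ (1 / 4 : ℝ) ≤ 9 * C * x₀ ^ (1 / 4 : ℝ) := by gcongr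
        _ ≤ 1 := hCx₀.le
    exact (hrec y ⟨hy0, by linarith⟩).trans <|
      max_pow_mul_sqrt_le hK hα0.le hα8.le ⟨hy0, by linarith⟩ hCy (hF01 y hy0).1 hFy
end

section
/- Let K ≥ 3 be an integer and let F : (0, ∞) → ℝ be nondecreasing with 0 ≤ F(x) ≤ 1 for all x. Assume there exist constants c, C, y₀ > 0 and r > 0 such that F(x) ≤ F(x y^{−2})^K + C ( y · F(c y)^K + y^r ) for all x > 0 and all y ∈ (0, y₀), and assume there exist C₀, x₀, α₀ > 0 such that F(x) ≤ C₀ x^{α₀} for all x ∈ (0, x₀]. Then for every γ ∈ (0, r/3) there exist C₁, x₁ > 0 such that F(x) ≤ C₁ x^{γ} for all x ∈ (0, x₁]. -/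
/-!
Substituting `y = x ^ β` in the recursion and using `F ^ K ≤ F ^ 3`, a bound `F(x) = O(x ^ α)` as
`x → 0⁺` improves to `F(x) = O(x ^ θ)` for every `θ` below `3α(1 - 2β)`, `β(1 + 3α)` and `βr`.
For a fixed `β` strictly between `max (γ / r) (γ / (1 + 3γ))` and `1 / 3`, these three exponents
exceed `α` by a fixed `δ > 0` as long as `α₀ ≤ α ≤ γ`, so finitely many steps reach `γ`.
-/

open Set Real Filter Topology Asymptotics

lemma isBigO_rpow_nhdsGT_zero_of_le {a b : ℝ} (h : a ≤ b) :
    (· ^ b : ℝ → ℝ) =O[𝓝[>] 0] (· ^ a) :=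
  .of_bound' <| mem_of_superset (Ioc_mem_nhdsGT one_pos) fun x hx ↦ by
    simpa [abs_of_nonneg, rpow_nonneg hx.1.le] using rpow_le_rpow_of_exponent_ge hx.1 hx.2 h

lemma tendsto_const_mul_rpow_nhdsGT_zero {c p : ℝ} (hc : 0 < c) (hp : 0 < p) :
    Tendsto (fun x : ℝ ↦ c * x ^ p) (𝓝[>] 0) (𝓝[>] 0) := by
  refine tendsto_nhdsWithin_iff.2 ⟨?_, eventually_mem_nhdsWithin.mono fun x (hx : 0 < x) ↦ ?_⟩
  · simpa [zero_rpow hp.ne'] using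
      ((continuousAt_rpow_const 0 p (.inr hp.le)).tendsto.const_mul c).mono_left nhdsWithin_le_nhds
  · exact mul_pos hc (rpow_pos_of_pos hx p)

lemma isBigO_rpow_nhdsGT_zero_of_forall_Ioc {F : ℝ → ℝ} {M x₀ α : ℝ} (hx₀ : 0 < x₀)
    (hF0 : ∀ x ∈ Ioc 0 x₀, 0 ≤ F x) (hF : ∀ x ∈ Ioc 0 x₀, F x ≤ M * x ^ α) :
    F =O[𝓝[>] 0] (· ^ α) :=
  .of_bound M <| mem_of_superset (Ioc_mem_nhdsGT hx₀) fun x hx ↦ by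
    simpa [abs_of_nonneg, hF0 x hx, rpow_nonneg hx.1.le] using hF x hx

lemma IsBigO.exists_forall_Ioc_le_rpow {F : ℝ → ℝ} {α : ℝ} (hF : F =O[𝓝[>] 0] (· ^ α)) :
    ∃ M : ℝ, 0 < M ∧ ∃ x₁ : ℝ, 0 < x₁ ∧ ∀ x ∈ Ioc 0 x₁, F x ≤ M * x ^ α := by
  obtain ⟨M, hM, hMF⟩ := hF.exists_pos
  obtain ⟨x₁, hx₁, hbound⟩ := (nhdsGT_basis_Ioc (0 : ℝ)).eventually_iff.1 hMF.bound
  refine ⟨M, hM, x₁, hx₁, fun x hx ↦ ?_⟩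
  have hFx := hbound hx
  rw [Real.norm_of_nonneg (rpow_nonneg hx.1.le _)] at hFx
  exact (le_abs_self _).trans hFx

lemma holds_of_antitone_of_add_step {P : ℝ → Prop} (hP : Antitone P) {a γ δ : ℝ} (hδ : 0 < δ)
    (ha : P a) (hstep : ∀ α, a ≤ α → α ≤ γ → P α → P (α + δ)) : P γ := by
  by_contra hγ
  have hlt : ∀ α, P α → α < γ := fun α hα ↦ lt_of_not_ge fun h ↦ hγ (hP h hα)
  have hall : ∀ n : ℕ, P (a + n * δ) := by
    intro n
    induction n with
    | zero => simpa using ha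
    | succ n ih =>
      have hnext := hstep _ (by nlinarith [n.cast_nonneg (α := ℝ)]) (hlt _ ih).le ih
      rwa [Nat.cast_succ, add_one_mul, ← add_assoc]
  obtain ⟨n, hn⟩ := exists_nat_gt ((γ - a) / δ)
  rw [div_lt_iff₀ hδ] at hn
  exact (hlt _ (hall n)).not_ge (by linarith)

lemma isBigO_pow_comp_const_mul_rpow {F : ℝ → ℝ} (hF01 : ∀ x, 0 < x → F x ∈ Icc 0 1)
    {K : ℕ} (hK : 3 ≤ K) {α c p : ℝ} (hc : 0 < c) (hp : 0 < p) (hF : F =O[𝓝[>] 0] (· ^ α)) :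
    (fun x ↦ F (c * x ^ p) ^ K) =O[𝓝[>] 0] (· ^ (3 * (α * p))) := by
  have ht := tendsto_const_mul_rpow_nhdsGT_zero hc hp
  have hK3 : (fun x ↦ F (c * x ^ p) ^ K) =O[𝓝[>] 0] (fun x ↦ F (c * x ^ p) ^ 3) :=
    .of_bound' <| (ht.eventually self_mem_nhdsWithin).mono fun x hx ↦ by
      obtain ⟨h0, h1⟩ := hF01 _ hx
      simpa [abs_of_nonneg, h0] using pow_le_pow_of_le_one h0 h1 hK
  refine hK3.trans (((hF.comp_tendsto ht).pow 3).trans ?_)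
  refine (isBigO_const_mul_self ((c ^ α) ^ 3) _ _).congr' ?_ EventuallyEq.rfl
  filter_upwards [self_mem_nhdsWithin] with x (hx : 0 < x)
  simp only [Function.comp_apply]
  rw [mul_rpow hc.le (rpow_nonneg hx.le _), ← rpow_mul hx.le, mul_pow, ← rpow_mul_natCast hx.le]
  ring_nf

theorem isBigO_rpow_of_recursion {K : ℕ} {F : ℝ → ℝ} {c C y₀ r : ℝ} (hK : 3 ≤ K)
    (hF01 : ∀ x, 0 < x → F x ∈ Icc 0 1) (hc : 0 < c) (hy₀ : 0 < y₀)
    (hrec : ∀ x : ℝ, 0 < x → ∀ y ∈ Ioo (0 : ℝ) y₀,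
      F x ≤ F (x * y⁻¹ ^ 2) ^ K + C * (y * F (c * y) ^ K + y ^ r))
    {α β θ : ℝ} (hβ : 0 < β) (hβ2 : 2 * β < 1) (hF : F =O[𝓝[>] 0] (· ^ α))
    (h₁ : θ ≤ 3 * (α * (1 - 2 * β))) (h₂ : θ ≤ β * (1 + 3 * α)) (h₃ : θ ≤ β * r) :
    F =O[𝓝[>] 0] (· ^ θ) := by
  have hy : Tendsto (fun x : ℝ ↦ x ^ β) (𝓝[>] 0) (𝓝[>] 0) := by
    simpa only [one_mul] using tendsto_const_mul_rpow_nhdsGT_zero one_pos hβ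
  have hrecy : F =O[𝓝[>] 0] fun x ↦
      F (1 * x ^ (1 - 2 * β)) ^ K + C * (x ^ β * F (c * x ^ β) ^ K + x ^ (β * r)) := by
    refine .of_bound' ?_
    filter_upwards [self_mem_nhdsWithin, hy.eventually (Ioo_mem_nhdsGT hy₀)]
      with x (hx : 0 < x) hxy
    have hsplit : x * (x ^ β)⁻¹ ^ 2 = 1 * x ^ (1 - 2 * β) := by
      rw [one_mul, rpow_sub hx, rpow_one, mul_comm 2 β, rpow_mul hx.le, rpow_two, inv_pow,
        div_eq_mul_inv]
    have hbound := hrec x hx _ hxy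
    rw [hsplit, ← rpow_mul hx.le] at hbound
    rw [Real.norm_of_nonneg (hF01 x hx).1]
    exact hbound.trans (le_abs_self _)
  refine hrecy.trans (.add ?_ (.const_mul_left (.add ?_ ?_) C))
  · exact (isBigO_pow_comp_const_mul_rpow hF01 hK one_pos (by linarith) hF).trans
      (isBigO_rpow_nhdsGT_zero_of_le (by linarith))
  · refine (((isBigO_refl _ _).mul (isBigO_pow_comp_const_mul_rpow hF01 hK hc hβ hF)).congr'
      EventuallyEq.rfl ?_).trans (isBigO_rpow_nhdsGT_zero_of_le h₂)
    filter_upwards [self_mem_nhdsWithin] with x (hx : 0 < x)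
    rw [← rpow_add hx]
    ring_nf
  · exact isBigO_rpow_nhdsGT_zero_of_le h₃

lemma exists_exponent_gain {γ r α₀ : ℝ} (hγ : 0 < γ) (hγr : 3 * γ < r) (hα₀ : 0 < α₀) :
    ∃ β δ : ℝ, 0 < β ∧ 2 * β < 1 ∧ 0 < δ ∧ ∀ α, α₀ ≤ α → α ≤ γ →
      α + δ ≤ 3 * (α * (1 - 2 * β)) ∧ α + δ ≤ β * (1 + 3 * α) ∧ α + δ ≤ β * r := by
  have hr : 0 < r := by linarith
  obtain ⟨β, hβlo, hβ3⟩ : ∃ β, max (γ / r) (γ / (1 + 3 * γ)) < β ∧ β < 1 / 3 := by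
    refine exists_between (max_lt ?_ ?_)
    · rw [div_lt_iff₀ hr]; linarith
    · rw [div_lt_iff₀ (by positivity)]; linarith
  rw [max_lt_iff, div_lt_iff₀ hr, div_lt_iff₀ (by positivity)] at hβlo
  obtain ⟨hβr, hβγ⟩ := hβlo
  have hβ : 0 < β := by nlinarith
  set δ := min ((2 - 6 * β) * α₀) (min (β - (1 - 3 * β) * γ) (β * r - γ))
  have hδ₁ : δ ≤ (2 - 6 * β) * α₀ := min_le_left _ _
  have hδ₂ : δ ≤ β - (1 - 3 * β) * γ := (min_le_right _ _).trans (min_le_left _ _)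
  have hδ₃ : δ ≤ β * r - γ := (min_le_right _ _).trans (min_le_right _ _)
  refine ⟨β, δ, hβ, by linarith, lt_min (by nlinarith) (lt_min (by nlinarith) (by linarith)),
    fun α hα₀α hαγ ↦ ⟨by nlinarith, by nlinarith, by linarith⟩⟩

theorem bootstrap_power_law_K_ge_three_general
    (K : ℕ) (hK : 3 ≤ K)
    (F : ℝ → ℝ)
    (hF01 : ∀ x : ℝ, 0 < x → F x ∈ Set.Icc (0 : ℝ) 1)
    (c C y₀ r : ℝ) (hc : 0 < c) (hy₀ : 0 < y₀)
    (hrec : ∀ x : ℝ, 0 < x → ∀ y ∈ Set.Ioo (0 : ℝ) y₀,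
      F x ≤ F (x * y⁻¹ ^ 2) ^ K + C * (y * F (c * y) ^ K + y ^ r))
    (C₀ x₀ α₀ : ℝ) (hx₀ : 0 < x₀) (hα₀ : 0 < α₀)
    (hapriori : ∀ x ∈ Set.Ioc (0 : ℝ) x₀, F x ≤ C₀ * x ^ α₀)
    (γ : ℝ) (hγ : γ ∈ Set.Ioo (0 : ℝ) (r / 3)) :
    ∃ C₁ : ℝ, 0 < C₁ ∧ ∃ x₁ : ℝ, 0 < x₁ ∧
      ∀ x ∈ Set.Ioc (0 : ℝ) x₁, F x ≤ C₁ * x ^ γ := by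
  obtain ⟨hγ, hγr⟩ := hγ
  have hstart : F =O[𝓝[>] 0] (· ^ α₀) :=
    isBigO_rpow_nhdsGT_zero_of_forall_Ioc hx₀ (fun x hx ↦ (hF01 x hx.1).1) hapriori
  obtain ⟨β, δ, hβ, hβ2, hδ, hgain⟩ := exists_exponent_gain hγ (by linarith) hα₀
  have hantitone : Antitone fun α : ℝ ↦ F =O[𝓝[>] 0] (· ^ α) :=
    fun a b hab hb ↦ hb.trans (isBigO_rpow_nhdsGT_zero_of_le hab)
  refine IsBigO.exists_forall_Ioc_le_rpow <|
    holds_of_antitone_of_add_step hantitone hδ hstart fun α hα₀α hαγ hα ↦ ?_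
  obtain ⟨h₁, h₂, h₃⟩ := hgain α hα₀α hαγ
  exact isBigO_rpow_of_recursion hK hF01 hc hy₀ hrec hβ hβ2 hα h₁ h₂ h₃

/-- Bootstrap for branching number `K ≥ 3`: if a nondecreasing
`F : (0,∞) → [0,1]` satisfies `F(x) ≤ F(x y⁻²)^K + C (y F(cy)^K + y^r)` and an a-priori
power bound `F(x) ≤ C₀ x^{α₀}` near `0`, then for every `γ < r/3` one has `F(x) ≤ C₁ x^γ`
near `0`. -/
theorem bootstrap_power_law_K_ge_three
    (K : ℕ) (hK : 3 ≤ K)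
    (F : ℝ → ℝ)
    (hmono : ∀ x y : ℝ, 0 < x → x ≤ y → F x ≤ F y)
    (hF01 : ∀ x : ℝ, 0 < x → F x ∈ Set.Icc (0 : ℝ) 1)
    (c C y₀ r : ℝ) (hc : 0 < c) (hC : 0 < C) (hy₀ : 0 < y₀) (hr : 0 < r)
    (hrec : ∀ x : ℝ, 0 < x → ∀ y ∈ Set.Ioo (0 : ℝ) y₀,
      F x ≤ F (x * y⁻¹ ^ 2) ^ K + C * (y * F (c * y) ^ K + y ^ r))
    (C₀ x₀ α₀ : ℝ) (hC₀ : 0 < C₀) (hx₀ : 0 < x₀) (hα₀ : 0 < α₀)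
    (hapriori : ∀ x ∈ Set.Ioc (0 : ℝ) x₀, F x ≤ C₀ * x ^ α₀)
    (γ : ℝ) (hγ : γ ∈ Set.Ioo (0 : ℝ) (r / 3)) :
    ∃ C₁ : ℝ, 0 < C₁ ∧ ∃ x₁ : ℝ, 0 < x₁ ∧
      ∀ x ∈ Set.Ioc (0 : ℝ) x₁, F x ≤ C₁ * x ^ γ :=
  bootstrap_power_law_K_ge_three_general K hK F hF01 c C y₀ r hc hy₀ hrec C₀ x₀ α₀ hx₀ hα₀ hapriori
    γ hγ
end

section
/- Let d ≥ 1 be an integer, let η ∈ (0,1], α > 0, C > 0, and let p : ℤ^d → [0, ∞) satisfy Σ_{x ∈ ℤ^d} p(x) = 1 and p(x) ≤ C η^α for every x ∈ ℤ^d. Then there exists b > 0, depending only on C and d, such that whenever b η^{−α/d} ≥ 1: Σ_{x : ‖x‖₁ < b η^{−α/d}} p(x) ≤ 1/2, and consequently for every β > 0: Σ_{x ∈ ℤ^d} ‖x‖₁^β · p(x) ≥ (b^β / 2) · η^{−β α / d}. -/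
open scoped ENNReal

/-!
If `p ≤ C η^α` pointwise, the open ℓ¹-ball of radius `R` carries mass at most `(2R+1)^d C η^α`,
since it contains at most `(2R+1)^d` lattice points. For `R = b η^{-α/d} ≥ 1` with
`b^d = (2·3^d C)⁻¹` this is at most `(3R)^d C η^α = 1/2`, so at least half of the mass lies where
`‖x‖₁ ≥ R`, and Markov's inequality gives `∑ ‖x‖₁^β p(x) ≥ R^β / 2`.
-/

open Finset

theorem Real.rpow_div_natCast_pow {x : ℝ} (hx : 0 ≤ x) (y : ℝ) {n : ℕ} (hn : n ≠ 0) :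
    (x ^ (y / n)) ^ n = x ^ y := by
  rw [← Real.rpow_natCast, ← Real.rpow_mul hx, div_mul_cancel₀ _ (Nat.cast_ne_zero.2 hn)]

section Markov

variable {α : Type*}

theorem ofReal_rpow_mul_tsum_compl_le_tsum (f p : α → ℝ) (hp : ∀ x, 0 ≤ p x) {R β : ℝ}
    (hR : 0 ≤ R) (hβ : 0 ≤ β) :
    ENNReal.ofReal (R ^ β) * ∑' x : ↥{x | f x < R}ᶜ, ENNReal.ofReal (p x)
      ≤ ∑' x, ENNReal.ofReal (f x ^ β * p x) := calc
  _ = ∑' x : ↥{x | f x < R}ᶜ, ENNReal.ofReal (R ^ β * p x) := by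
    rw [← ENNReal.tsum_mul_left]
    simp only [ENNReal.ofReal_mul (Real.rpow_nonneg hR β)]
  _ ≤ ∑' x : ↥{x | f x < R}ᶜ, ENNReal.ofReal (f x ^ β * p x) := by
    gcongr with x
    exacts [hp x, le_of_not_gt x.2]
  _ ≤ ∑' x, ENNReal.ofReal (f x ^ β * p x) :=
    ENNReal.tsum_comp_le_tsum_of_injective Subtype.val_injective _

theorem ofReal_half_le_tsum_compl {p : α → ℝ} (hp : ∀ x, 0 ≤ p x) (hp1 : HasSum p 1)
    {S : Set α} (hS : ∑' x : S, p x ≤ 1 / 2) :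
    ENNReal.ofReal (1 / 2) ≤ ∑' x : ↥Sᶜ, ENNReal.ofReal (p x) := by
  have hsplit := Summable.tsum_add_tsum_compl (hp1.summable.subtype S)
    (hp1.summable.subtype Sᶜ)
  rw [hp1.tsum_eq] at hsplit
  rw [← ENNReal.ofReal_tsum_of_nonneg (f := fun x : ↥Sᶜ => p x) (fun x => hp x)
    (hp1.summable.subtype Sᶜ)]
  exact ENNReal.ofReal_le_ofReal (by linarith)

theorem ofReal_rpow_div_two_le_tsum {f p : α → ℝ} (hp : ∀ x, 0 ≤ p x) (hp1 : HasSum p 1)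
    {R β : ℝ} (hR : 0 ≤ R) (hβ : 0 ≤ β) (hmass : ∑' x : {x // f x < R}, p x ≤ 1 / 2) :
    ENNReal.ofReal (R ^ β / 2) ≤ ∑' x, ENNReal.ofReal (f x ^ β * p x) := calc
  _ = ENNReal.ofReal (R ^ β) * ENNReal.ofReal (1 / 2) := by
    rw [← ENNReal.ofReal_mul (Real.rpow_nonneg hR β), mul_one_div]
  _ ≤ _ := by
    grw [ofReal_half_le_tsum_compl hp hp1 hmass]
    exact ofReal_rpow_mul_tsum_compl_le_tsum f p hp hR hβ

end Markov

section LatticeBall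

variable {ι : Type*} [Fintype ι]

def l1Norm (x : ι → ℤ) : ℕ := ∑ i, (x i).natAbs

variable [DecidableEq ι]

variable (ι) in
noncomputable def l1Ball (R : ℝ) : Finset (ι → ℤ) :=
  {x ∈ Fintype.piFinset fun _ => Icc (-⌊R⌋₊ : ℤ) ⌊R⌋₊ | (l1Norm x : ℝ) < R}

theorem mem_l1Ball {R : ℝ} {x : ι → ℤ} : x ∈ l1Ball ι R ↔ (l1Norm x : ℝ) < R := by
  refine ⟨fun hx => (mem_filter.1 hx).2, fun hx => mem_filter.2 ⟨?_, hx⟩⟩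
  refine Fintype.mem_piFinset.2 fun i => ?_
  have hxi : (x i).natAbs ≤ l1Norm x :=
    single_le_sum (f := fun j => (x j).natAbs) (fun j _ => Nat.zero_le _) (mem_univ i)
  have hi : (x i).natAbs ≤ ⌊R⌋₊ := Nat.le_floor ((Nat.cast_le.2 hxi).trans_lt hx).le
  rw [mem_Icc]
  omega

theorem card_l1Ball_le {R : ℝ} (hR : 0 ≤ R) :
    (#(l1Ball ι R) : ℝ) ≤ (2 * R + 1) ^ Fintype.card ι := calc
  (#(l1Ball ι R) : ℝ) ≤ #(Fintype.piFinset fun _ : ι => Icc (-⌊R⌋₊ : ℤ) ⌊R⌋₊) := by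
    exact_mod_cast card_filter_le _ _
  _ = (2 * ⌊R⌋₊ + 1 : ℝ) ^ Fintype.card ι := by
    rw [Fintype.card_piFinset, prod_const, card_univ, Int.card_Icc,
      show (⌊R⌋₊ + 1 - -⌊R⌋₊ : ℤ).toNat = 2 * ⌊R⌋₊ + 1 by omega]
    push_cast
    rfl
  _ ≤ (2 * R + 1) ^ Fintype.card ι := by
    gcongr
    exact Nat.floor_le hR

theorem tsum_l1Norm_lt_eq_sum (f : (ι → ℤ) → ℝ) (R : ℝ) :
    ∑' x : {x // (l1Norm x : ℝ) < R}, f x.1 = ∑ x ∈ l1Ball ι R, f x :=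
  ((Equiv.subtypeEquivRight fun _ => mem_l1Ball).tsum_eq fun y => f y.1).symm.trans
    (Finset.tsum_subtype _ f)

theorem tsum_l1Norm_lt_le {p : (ι → ℤ) → ℝ} {M R : ℝ} (hpM : ∀ x, p x ≤ M) (hM : 0 ≤ M)
    (hR : 0 ≤ R) :
    ∑' x : {x // (l1Norm x : ℝ) < R}, p x.1 ≤ (2 * R + 1) ^ Fintype.card ι * M := by
  rw [tsum_l1Norm_lt_eq_sum]
  grw [sum_le_card_nsmul _ _ M fun x _ => hpM x, nsmul_eq_mul, card_l1Ball_le hR]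

end LatticeBall

/-- Guarneri's lower bound: if a probability distribution `p` on `ℤ^d`
satisfies `p(x) ≤ C η^α`, then there is `b > 0` depending only on `C` and `d` such that
whenever `b η^{−α/d} ≥ 1`, the mass within ℓ¹-distance `b η^{−α/d}` of the origin is at most
`1/2`, and consequently the `β`-th moment is at least `(b^β/2) η^{−βα/d}`. -/
theorem guarneri_lower_bound
    (d : ℕ) (hd : 1 ≤ d) (C : ℝ) (hC : 0 < C) :
    ∃ b : ℝ, 0 < b ∧
      ∀ η α : ℝ, η ∈ Set.Ioc (0 : ℝ) 1 → 0 < α →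
      ∀ p : (Fin d → ℤ) → ℝ, (∀ x, 0 ≤ p x) → HasSum p 1 →
      (∀ x, p x ≤ C * η ^ α) →
      1 ≤ b * η ^ (-(α / (d : ℝ))) →
      (∑' x : {x : Fin d → ℤ // ((∑ i, (x i).natAbs : ℕ) : ℝ) < b * η ^ (-(α / (d : ℝ)))},
          p x.1 ≤ 1 / 2) ∧
        ∀ β : ℝ, 0 < β →
          ENNReal.ofReal (b ^ β / 2 * η ^ (-(β * α / (d : ℝ))))
            ≤ ∑' x : Fin d → ℤ,
                ENNReal.ofReal (((∑ i, (x i).natAbs : ℕ) : ℝ) ^ β * p x) := by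
  have hd0 : d ≠ 0 := by omega
  have hX : 0 < 2 * 3 ^ d * C := by positivity
  set b := (2 * 3 ^ d * C) ^ (-1 / d : ℝ) with hb
  have hb0 : 0 < b := by positivity
  refine ⟨b, hb0, ?_⟩
  rintro η α ⟨hη, -⟩ - p hp0 hp1 hpC hR1
  set R := b * η ^ (-(α / d)) with hR
  have hmass : ∑' x : {x : Fin d → ℤ // (l1Norm x : ℝ) < R}, p x.1 ≤ 1 / 2 := calc
    _ ≤ (2 * R + 1) ^ d * (C * η ^ α) := by
      simpa using tsum_l1Norm_lt_le hpC (by positivity) (by positivity)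
    _ ≤ (3 * R) ^ d * (C * η ^ α) := by gcongr; linarith
    _ = 1 / 2 := by
      rw [hR, mul_pow, mul_pow, hb, ← neg_div, Real.rpow_div_natCast_pow hX.le _ hd0,
        Real.rpow_div_natCast_pow hη.le _ hd0, Real.rpow_neg_one, Real.rpow_neg hη.le]
      field_simp
  refine ⟨hmass, fun β hβ => ?_⟩
  have hRβ : b ^ β / 2 * η ^ (-(β * α / d)) = R ^ β / 2 := by
    rw [hR, Real.mul_rpow hb0.le (by positivity), ← Real.rpow_mul hη.le]
    ring_nf
  rw [hRβ]
  exact ofReal_rpow_div_two_le_tsum hp0 hp1 (by positivity) hβ.le hmass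
end
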